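/- If the pair (S, E) is observable, then the block upper-triangular pair (A_T, T) is observable, where A_T = [[A, e^{Aτ}E],[0, S]] and T = [I, 0]. -/

import Mathlib

/-!
A vector `w = (w₁, w₂)` killed by `T = [I, 0]` has `w₁ = 0`. The eigen-equation for `A_T` then
says that `w₂` is an eigenvector of `S` with `e^{Aτ} E w₂ = 0`, and since `e^{Aτ}` is invertible,
`E w₂ = 0`; observability of `(S, E)` forces `w₂ = 0`.
-/

open Matrix

namespace Matrix

variable {R m k p : Type*} [CommRing R] [Fintype m] [Fintype k] [DecidableEq m] [DecidableEq k]

/-- The Hautus test: no eigenvector of `M` is annihilated by `C`. -/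
def HautusObservable (M : Matrix k k R) (C : Matrix p k R) : Prop :=
  ∀ (lam : R) (v : k → R), (lam • (1 : Matrix k k R) - M) *ᵥ v = 0 → C *ᵥ v = 0 → v = 0

theorem HautusObservable.isUnit_mul {D : Matrix k k R} {E : Matrix m k R} {U : Matrix m m R}
    (hobs : HautusObservable D E) (hU : IsUnit U) : HautusObservable D (U * E) := by
  intro lam v hD hUE
  refine hobs lam v hD (mulVec_injective_of_isUnit hU ?_)
  rw [mulVec_mulVec, hUE, mulVec_zero]

omit [Fintype m] [Fintype k] in
theorem smul_one_sub_fromBlocks_zero₂₁ (lam : R) (A : Matrix m m R) (B : Matrix m k R)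
    (D : Matrix k k R) :
    lam • (1 : Matrix (m ⊕ k) (m ⊕ k) R) - fromBlocks A B 0 D =
      fromBlocks (lam • 1 - A) (-B) 0 (lam • 1 - D) := by
  rw [← fromBlocks_one, fromBlocks_smul, sub_eq_add_neg, fromBlocks_neg, fromBlocks_add]
  simp [sub_eq_add_neg]

theorem HautusObservable.fromBlocks_fromCols_one_zero {D : Matrix k k R} {B : Matrix m k R}
    (hobs : HautusObservable D B) (A : Matrix m m R) :
    HautusObservable (fromBlocks A B 0 D) (fromCols (1 : Matrix m m R) (0 : Matrix m k R)) := by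
  intro lam w hw hC
  have hw₁ : w ∘ Sum.inl = 0 := by simpa using hC
  rw [smul_one_sub_fromBlocks_zero₂₁, fromBlocks_mulVec, hw₁, ← Sum.elim_zero_zero,
    Sum.elim_eq_iff] at hw
  simp only [mulVec_zero, zero_add, neg_mulVec, neg_eq_zero] at hw
  have hw₂ : w ∘ Sum.inr = 0 := hobs lam _ hw.2 hw.1
  rw [← Sum.elim_comp_inl_inr w, hw₁, hw₂, Sum.elim_zero_zero]

end Matrix

/-- If the pair `(S, E)` is observable (Hautus test over `ℂ`), then the
block pair `(A_T, T)` with `A_T = [[A, e^{Aτ}E], [0, S]]` and `T = [I, 0]`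
is observable. Observability of `(S, E)` is phrased as: for every `λ : ℂ`,
the stacked matrix `[λI - S; E]` has trivial kernel. -/
theorem observability_of_extended_pair {n s : ℕ}
    (A : Matrix (Fin n) (Fin n) ℝ) (E : Matrix (Fin n) (Fin s) ℝ)
    (S : Matrix (Fin s) (Fin s) ℝ) (τ : ℝ)
    (hobs : ∀ (lam : ℂ) (v : Fin s → ℂ),
      (lam • (1 : Matrix (Fin s) (Fin s) ℂ) - S.map (algebraMap ℝ ℂ)).mulVec v = 0 →
      (E.map (algebraMap ℝ ℂ)).mulVec v = 0 → v = 0) :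
    ∀ (lam : ℂ) (w : (Fin n ⊕ Fin s) → ℂ),
      (lam • (1 : Matrix (Fin n ⊕ Fin s) (Fin n ⊕ Fin s) ℂ) -
        (Matrix.fromBlocks A (NormedSpace.exp (τ • A) * E) 0 S).map
          (algebraMap ℝ ℂ)).mulVec w = 0 →
      ((Matrix.fromCols (1 : Matrix (Fin n) (Fin n) ℝ)
          (0 : Matrix (Fin n) (Fin s) ℝ)).map (algebraMap ℝ ℂ)).mulVec w = 0 →
      w = 0 := by
  have hexp : IsUnit ((NormedSpace.exp (τ • A)).map (algebraMap ℝ ℂ)) :=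
    (isUnit_exp (τ • A)).map (algebraMap ℝ ℂ).mapMatrix
  simp only [fromBlocks_map, fromCols_map, Matrix.map_mul, Matrix.map_zero, Matrix.map_one,
    map_zero, map_one]
  exact (HautusObservable.isUnit_mul hobs hexp).fromBlocks_fromCols_one_zero _
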